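/- Let n ≥ 5 be an integer. There exist a constant C > 0 and ℓ₀ ≥ 1 such that for every real ℓ ≥ ℓ₀, | I₂(ℓ) + ((n−1)·√π / (2(n−4)^{3/2})) · ℓ^{3/2} | ≤ C·ℓ^{1/2}. In particular, ℓ^{−3/2} · I₂(ℓ) → −(n−1)√π / (2(n−4)^{3/2}) as ℓ → ∞, so I₂(ℓ) → −∞. -/

import Mathlib

/-!
Put `c = (n - 4) ℓ` and `t = ℓ s²`. The Schouten eigenvalues are `λ₁ = 2ℓ(1 + t) + O(1 + t²)` and
`λ₂ = -2ℓt + O(1 + t²)`, so `σ₂ = (n - 1) ℓ² (-4t + 2(n - 4)t²) + O(n² ℓ (1 + t⁴))`, and the weight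
`(1 - s²)^((n-2)/2)` is `1 + O(n s²)`. Replacing the integrand on `[-1, 1]` by the leading term
`e^{-cs²} (n - 1)(-4ℓ³s² + 2(n - 4)ℓ⁴s⁴)` on all of `ℝ`, its second and fourth Gaussian moments give
exactly `-(n - 1)√π ℓ^{3/2} / (2(n - 4)^{3/2})`. The error, on `[-1, 1]` and off it, is dominated by
`6n³(ℓ + ℓ⁵s⁸) e^{-cs²}`, whose integral is `O(ℓ^{1/2})` because `c ≥ ℓ`.
-/

open Real Filter

/-- First eigenvalue of the Schouten tensor of `g_ℓ = e^{−2ℓs²} g_{S^n}` w.r.t. `g_{S^n}`. -/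
noncomputable def lam1 (ℓ s : ℝ) : ℝ :=
  1 / 2 + 2 * ℓ - 4 * ℓ * s ^ 2 + 2 * ℓ ^ 2 * s ^ 2 * (1 - s ^ 2)

/-- Second eigenvalue (of multiplicity `n − 1`). -/
noncomputable def lam2 (ℓ s : ℝ) : ℝ :=
  1 / 2 - 2 * ℓ * s ^ 2 - 2 * ℓ ^ 2 * s ^ 2 * (1 - s ^ 2)

/-- Total σ₂-curvature integral `I₂(ℓ)` (up to the factor `ω_{n−1}`). -/
noncomputable def I2 (n : ℕ) (ℓ : ℝ) : ℝ :=
  ∫ s in (-1 : ℝ)..1,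
    Real.exp (-((n : ℝ) - 4) * ℓ * s ^ 2) * (1 - s ^ 2) ^ (((n : ℝ) - 2) / 2) *
      ((n - 1) * lam1 ℓ s * lam2 ℓ s + ((n - 1) * (n - 2) / 2) * (lam2 ℓ s) ^ 2)

open MeasureTheory Set Topology

lemma integrable_pow_mul_exp_neg_mul_sq {b : ℝ} (hb : 0 < b) (k : ℕ) :
    Integrable fun x : ℝ => x ^ k * exp (-b * x ^ 2) := by
  simpa using integrable_rpow_mul_exp_neg_mul_sq hb (s := k) (by linarith [k.cast_nonneg (α := ℝ)])

lemma integral_pow_two_mul_mul_exp_neg_mul_sq {b : ℝ} (hb : 0 < b) (k : ℕ) :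
    ∫ x : ℝ, x ^ (2 * k) * exp (-b * x ^ 2) = Gamma (k + 1 / 2) * b ^ (-(k + 1 / 2 : ℝ)) := by
  have hIoi : ∫ x in Ioi (0 : ℝ), x ^ (2 * k) * exp (-b * x ^ 2)
      = ∫ x in Ioi (0 : ℝ), x ^ ((2 * k : ℕ) : ℝ) * exp (-b * x ^ (2 : ℝ)) := by
    refine setIntegral_congr_fun measurableSet_Ioi fun x _ => ?_
    simp only [rpow_natCast, rpow_two]
  have := integral_comp_abs (f := fun x : ℝ => x ^ (2 * k) * exp (-b * x ^ 2))
  simp only [sq_abs, (even_two_mul k).pow_abs] at this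
  rw [this, hIoi, integral_rpow_mul_exp_neg_mul_rpow two_pos
    (by push_cast; linarith [k.cast_nonneg (α := ℝ)]) hb]
  push_cast
  ring_nf

lemma pow_succ_mul_integral_pow_mul_exp_neg_mul_sq_le {b ℓ : ℝ} (hℓ : 0 < ℓ) (hb : ℓ ≤ b)
    (k : ℕ) : ℓ ^ (k + 1) * ∫ x : ℝ, x ^ (2 * k) * exp (-b * x ^ 2) ≤ Gamma (k + 1 / 2) * √ℓ := by
  rw [integral_pow_two_mul_mul_exp_neg_mul_sq (hℓ.trans_le hb), sqrt_eq_rpow]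
  have hΓ : 0 < Gamma (k + 1 / 2) := Gamma_pos_of_pos (by positivity)
  calc ℓ ^ (k + 1) * (Gamma (k + 1 / 2) * b ^ (-(k + 1 / 2 : ℝ)))
      ≤ ℓ ^ (k + 1) * (Gamma (k + 1 / 2) * ℓ ^ (-(k + 1 / 2 : ℝ))) := by
        have : -(k + 1 / 2 : ℝ) ≤ 0 := by linarith [k.cast_nonneg (α := ℝ)]
        exact mul_le_mul_of_nonneg_left
          (mul_le_mul_of_nonneg_left (rpow_le_rpow_of_nonpos hℓ hb this) hΓ.le) (by positivity)
    _ = Gamma (k + 1 / 2) * ℓ ^ (1 / 2 : ℝ) := by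
        rw [← rpow_natCast, mul_left_comm, ← rpow_add hℓ]
        push_cast; ring_nf

lemma tendsto_rpow_neg_mul_of_abs_add_le {f : ℝ → ℝ} {A C a b : ℝ} (hba : b < a)
    (h : ∀ᶠ x in atTop, |f x + A * x ^ a| ≤ C * x ^ b) :
    Tendsto (fun x => x ^ (-a) * f x) atTop (𝓝 (-A)) := by
  have hbound : ∀ᶠ x in atTop, ‖x ^ (-a) * f x - -A‖ ≤ C * x ^ (-(a - b)) := by
    filter_upwards [h, eventually_gt_atTop 0] with x hx hx0
    have hinv : x ^ (-a) * x ^ a = 1 := by rw [← rpow_add hx0, neg_add_cancel, rpow_zero]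
    calc ‖x ^ (-a) * f x - -A‖ = |x ^ (-a) * (f x + A * x ^ a)| := by
          rw [norm_eq_abs]; congr 1; linear_combination -A * hinv
      _ = x ^ (-a) * |f x + A * x ^ a| := by rw [abs_mul, abs_of_pos (rpow_pos_of_pos hx0 _)]
      _ ≤ x ^ (-a) * (C * x ^ b) := by gcongr
      _ = C * x ^ (-(a - b)) := by rw [neg_sub, sub_eq_neg_add, rpow_add hx0]; ring
  have hlim : Tendsto (fun x => C * x ^ (-(a - b))) atTop (𝓝 0) := by
    simpa using (tendsto_rpow_neg_atTop (sub_pos.2 hba)).const_mul C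
  exact tendsto_sub_nhds_zero_iff.1 (squeeze_zero_norm' hbound hlim)

lemma tendsto_atBot_of_abs_add_le {f : ℝ → ℝ} {A C a b : ℝ} (hA : 0 < A) (ha : 0 < a)
    (hba : b < a) (h : ∀ᶠ x in atTop, |f x + A * x ^ a| ≤ C * x ^ b) :
    Tendsto f atTop atBot := by
  refine ((tendsto_rpow_atTop ha).atTop_mul_neg (neg_lt_zero.2 hA)
    (tendsto_rpow_neg_mul_of_abs_add_le hba h)).congr' ?_
  filter_upwards [eventually_gt_atTop 0] with x hx
  rw [← mul_assoc, ← rpow_add hx, add_neg_cancel, rpow_zero, one_mul]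

lemma pow_le_one_add_pow_four {t : ℝ} (ht : 0 ≤ t) {k : ℕ} (hk : k ≤ 4) : t ^ k ≤ 1 + t ^ 4 := by
  rcases le_total t 1 with h | h
  · linarith [pow_le_one₀ ht h (n := k), pow_nonneg ht 4]
  · linarith [pow_le_pow_right₀ h hk]

lemma abs_one_sub_rpow_sub_one_le {y p : ℝ} (hy0 : 0 ≤ y) (hy1 : y ≤ 1) (hp : 1 ≤ p) :
    |(1 - y) ^ p - 1| ≤ p * y := by
  have hle : (1 - y) ^ p ≤ 1 := rpow_le_one (by linarith) (by linarith) (by linarith)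
  have hge : 1 + p * -y ≤ (1 + -y) ^ p := one_add_mul_self_le_rpow_one_add (by linarith) hp
  rw [← sub_eq_add_neg] at hge
  rw [abs_sub_comm, abs_of_nonneg (by linarith)]
  linarith

/-- `σ₂` of the eigenvalue list `(λ₁, λ₂, …, λ₂)` with `λ₂` repeated `ν - 1` times. -/
noncomputable def sigma2 (ν ℓ s : ℝ) : ℝ :=
  (ν - 1) * lam1 ℓ s * lam2 ℓ s + ((ν - 1) * (ν - 2) / 2) * lam2 ℓ s ^ 2

/-- The terms of `sigma2` of order `ℓ²` when `t = ℓ s²` stays bounded. -/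
noncomputable def sigma2Lead (ν ℓ s : ℝ) : ℝ :=
  (ν - 1) * (-4 * ℓ ^ 3 * s ^ 2 + 2 * (ν - 4) * ℓ ^ 4 * s ^ 4)

noncomputable def sigma2Integrand (ν ℓ s : ℝ) : ℝ :=
  exp (-(ν - 4) * ℓ * s ^ 2) * (1 - s ^ 2) ^ ((ν - 2) / 2) * sigma2 ν ℓ s

lemma abs_sigma2_sub_sigma2Lead_le {ν ℓ : ℝ} (hν : 5 ≤ ν) (hℓ : 1 ≤ ℓ) (s : ℝ) :
    |sigma2 ν ℓ s - sigma2Lead ν ℓ s| ≤ 14 * ν ^ 2 * ℓ * (1 + (ℓ * s ^ 2) ^ 4) := by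
  obtain ⟨t, ht_def⟩ : ∃ t, t = ℓ * s ^ 2 := ⟨_, rfl⟩
  rw [← ht_def]
  have ht : 0 ≤ t := by rw [ht_def]; positivity
  have h1 := pow_le_one_add_pow_four ht (k := 1) (by norm_num)
  have h2 := pow_le_one_add_pow_four ht (k := 2) (by norm_num)
  have h3 := pow_le_one_add_pow_four ht (k := 3) (by norm_num)
  have h4 : 0 ≤ t ^ 4 := by positivity
  -- `lam1 = 2ℓ(1 + t) + w` and `lam2 = -2ℓt + r`; the `ℓ²` terms of `sigma2` are `sigma2Lead`.
  set r := 1 / 2 - 2 * t + 2 * t ^ 2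
  set w := 1 / 2 - 4 * t - 2 * t ^ 2
  set A := 1 - 4 * t + 8 * t ^ 2 + 8 * t ^ 3 - (ν - 2) * (t * (1 - 2 * t) ^ 2)
  set B := w * r + (ν - 2) * r ^ 2 / 2
  have hA : |A| ≤ 7 * ν * (1 + t ^ 4) := by
    have : 0 ≤ t * (1 - 2 * t) ^ 2 := by positivity
    have : t * (1 - 2 * t) ^ 2 ≤ 5 * (1 + t ^ 4) := by nlinarith
    rw [abs_le]; constructor <;> nlinarith
  have hB : |B| ≤ 7 * ν * (1 + t ^ 4) := by
    have hr0 : 0 ≤ r := by simp only [r]; nlinarith [sq_nonneg (2 * t - 1)]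
    have hr1 : r ≤ 1 / 2 + 2 * t ^ 2 := by simp only [r]; nlinarith
    have hw : |w| ≤ 1 / 2 + 4 * t + 2 * t ^ 2 := by
      simp only [w]; rw [abs_le]; constructor <;> nlinarith
    have hwr : |w * r| ≤ 17 * (1 + t ^ 4) := by
      rw [abs_mul, abs_of_nonneg hr0]
      nlinarith [mul_le_mul hw hr1 hr0 (by positivity)]
    have hrr : r ^ 2 ≤ 5 * (1 + t ^ 4) := by nlinarith [pow_le_pow_left₀ hr0 hr1 2]
    have := abs_add_le (w * r) ((ν - 2) * r ^ 2 / 2)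
    rw [abs_of_nonneg (by have := sq_nonneg r; nlinarith : 0 ≤ (ν - 2) * r ^ 2 / 2)] at this
    nlinarith
  have key : sigma2 ν ℓ s - sigma2Lead ν ℓ s = (ν - 1) * (ℓ * A + B) := by
    simp only [sigma2, sigma2Lead, lam1, lam2, A, B, r, w, ht_def]; ring
  rw [key, abs_mul, abs_of_nonneg (by linarith)]
  calc (ν - 1) * |ℓ * A + B| ≤ ν * (ℓ * (7 * ν * (1 + t ^ 4)) + ℓ * (7 * ν * (1 + t ^ 4))) := by
        gcongr
        · linarith
        · refine (abs_add_le _ _).trans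
            (add_le_add ?_ (hB.trans (le_mul_of_one_le_left (by positivity) hℓ)))
          rw [abs_mul, abs_of_nonneg (by linarith)]; gcongr
    _ = 14 * ν ^ 2 * ℓ * (1 + t ^ 4) := by ring

lemma abs_sigma2Lead_le {ν ℓ : ℝ} (hν : 4 ≤ ν) (hℓ : 0 ≤ ℓ) (s : ℝ) :
    |sigma2Lead ν ℓ s| ≤ 2 * ν ^ 2 * ℓ ^ 2 * (2 * (ℓ * s ^ 2) + (ℓ * s ^ 2) ^ 2) := by
  obtain ⟨t, ht_def⟩ : ∃ t, t = ℓ * s ^ 2 := ⟨_, rfl⟩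
  have ht : 0 ≤ t := by rw [ht_def]; positivity
  have key : sigma2Lead ν ℓ s = (ν - 1) * ℓ ^ 2 * (-4 * t + 2 * (ν - 4) * t ^ 2) := by
    rw [ht_def, sigma2Lead]; ring
  have hpoly : |-4 * t + 2 * (ν - 4) * t ^ 2| ≤ 2 * ν * (2 * t + t ^ 2) := by
    rw [abs_le]; constructor <;> nlinarith [sq_nonneg t]
  rw [← ht_def, key, abs_mul, abs_mul, abs_of_nonneg (by linarith : 0 ≤ ν - 1),
    abs_of_nonneg (sq_nonneg ℓ)]
  calc (ν - 1) * ℓ ^ 2 * |-4 * t + 2 * (ν - 4) * t ^ 2|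
      ≤ ν * ℓ ^ 2 * (2 * ν * (2 * t + t ^ 2)) := by gcongr; linarith
    _ = 2 * ν ^ 2 * ℓ ^ 2 * (2 * t + t ^ 2) := by ring

lemma abs_rpow_mul_sigma2_sub_sigma2Lead_le {ν ℓ s : ℝ} (hν : 5 ≤ ν) (hℓ : 1 ≤ ℓ) (hs : s ^ 2 ≤ 1) :
    |(1 - s ^ 2) ^ ((ν - 2) / 2) * sigma2 ν ℓ s - sigma2Lead ν ℓ s|
      ≤ 6 * ν ^ 3 * ℓ * (1 + (ℓ * s ^ 2) ^ 4) := by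
  set P := (1 - s ^ 2) ^ ((ν - 2) / 2)
  set t := ℓ * s ^ 2 with ht_def
  have ht : 0 ≤ t := by positivity
  have hP0 : 0 ≤ P := rpow_nonneg (by linarith) _
  have hP1 : P ≤ 1 := rpow_le_one (by linarith) (by linarith [sq_nonneg s]) (by linarith)
  have hP : |P - 1| ≤ (ν - 2) / 2 * s ^ 2 :=
    abs_one_sub_rpow_sub_one_le (sq_nonneg s) hs (by linarith)
  have hlead := abs_sigma2Lead_le (by linarith) (by linarith) s (ν := ν) (ℓ := ℓ)
  have hdiff := abs_sigma2_sub_sigma2Lead_le hν hℓ s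
  have h2 := pow_le_one_add_pow_four ht (k := 2) (by norm_num)
  have h3 := pow_le_one_add_pow_four ht (k := 3) (by norm_num)
  have hfirst : |P * (sigma2 ν ℓ s - sigma2Lead ν ℓ s)| ≤ 14 * ν ^ 2 * ℓ * (1 + t ^ 4) := by
    rw [abs_mul, abs_of_nonneg hP0]
    exact (mul_le_of_le_one_left (abs_nonneg _) hP1).trans hdiff
  have hsecond : |(P - 1) * sigma2Lead ν ℓ s| ≤ 3 * ν ^ 3 * ℓ * (1 + t ^ 4) := by
    rw [abs_mul]
    calc |P - 1| * |sigma2Lead ν ℓ s|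
        ≤ (ν - 2) / 2 * s ^ 2 * (2 * ν ^ 2 * ℓ ^ 2 * (2 * t + t ^ 2)) := by
          gcongr; exact mul_nonneg (by linarith) (sq_nonneg s)
      _ = (ν - 2) * ν ^ 2 * ℓ * (2 * t ^ 2 + t ^ 3) := by rw [ht_def]; ring
      _ ≤ ν * ν ^ 2 * ℓ * (3 * (1 + t ^ 4)) := by gcongr <;> linarith
      _ = 3 * ν ^ 3 * ℓ * (1 + t ^ 4) := by ring
  calc |P * sigma2 ν ℓ s - sigma2Lead ν ℓ s|
      = |P * (sigma2 ν ℓ s - sigma2Lead ν ℓ s) + (P - 1) * sigma2Lead ν ℓ s| := by ring_nf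
    _ ≤ 14 * ν ^ 2 * ℓ * (1 + t ^ 4) + 3 * ν ^ 3 * ℓ * (1 + t ^ 4) :=
      (abs_add_le _ _).trans (add_le_add hfirst hsecond)
    _ ≤ 6 * ν ^ 3 * ℓ * (1 + t ^ 4) := by
      have : 0 ≤ ν ^ 2 * ℓ * (1 + t ^ 4) := by positivity
      nlinarith

lemma abs_sigma2Lead_le_of_one_le_sq {ν ℓ s : ℝ} (hν : 5 ≤ ν) (hℓ : 1 ≤ ℓ) (hs : 1 ≤ s ^ 2) :
    |sigma2Lead ν ℓ s| ≤ 6 * ν ^ 3 * ℓ * (1 + (ℓ * s ^ 2) ^ 4) := by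
  refine (abs_sigma2Lead_le (by linarith) (by linarith) s).trans ?_
  set t := ℓ * s ^ 2
  have hℓt : ℓ ≤ t := le_mul_of_one_le_right (by linarith) hs
  have ht : 1 ≤ t := hℓ.trans hℓt
  have h1 : ℓ ^ 2 * t ≤ ℓ * t ^ 4 := by
    calc ℓ ^ 2 * t = ℓ * t * ℓ := by ring
      _ ≤ ℓ * t * t ^ 3 := by gcongr; exact hℓt.trans (le_self_pow₀ ht (by norm_num))
      _ = ℓ * t ^ 4 := by ring
  have h2 : ℓ ^ 2 * t ^ 2 ≤ ℓ * t ^ 4 := by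
    calc ℓ ^ 2 * t ^ 2 = ℓ * t ^ 2 * ℓ := by ring
      _ ≤ ℓ * t ^ 2 * t ^ 2 := by gcongr; exact hℓt.trans (le_self_pow₀ ht (by norm_num))
      _ = ℓ * t ^ 4 := by ring
  have hν2 : ν ^ 2 ≤ ν ^ 3 := pow_le_pow_right₀ (by linarith) (by norm_num)
  calc 2 * ν ^ 2 * ℓ ^ 2 * (2 * t + t ^ 2)
        = 2 * ν ^ 2 * (2 * (ℓ ^ 2 * t) + ℓ ^ 2 * t ^ 2) := by ring
    _ ≤ 2 * ν ^ 3 * (2 * (ℓ * t ^ 4) + ℓ * t ^ 4) := by gcongr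
    _ ≤ 6 * ν ^ 3 * ℓ * (1 + t ^ 4) := by nlinarith [pow_nonneg (show (0:ℝ) ≤ ν by linarith) 3]

lemma exp_mul_sigma2Lead_eq (ν ℓ : ℝ) :
    (fun s => exp (-((ν - 4) * ℓ) * s ^ 2) * sigma2Lead ν ℓ s) = fun s =>
      -4 * (ν - 1) * ℓ ^ 3 * (s ^ (2 * 1) * exp (-((ν - 4) * ℓ) * s ^ 2))
        + 2 * (ν - 1) * (ν - 4) * ℓ ^ 4 * (s ^ (2 * 2) * exp (-((ν - 4) * ℓ) * s ^ 2)) := by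
  ext s; rw [sigma2Lead]; ring

lemma integrable_exp_mul_sigma2Lead {ν ℓ : ℝ} (hc : 0 < (ν - 4) * ℓ) :
    Integrable fun s => exp (-((ν - 4) * ℓ) * s ^ 2) * sigma2Lead ν ℓ s := by
  rw [exp_mul_sigma2Lead_eq]
  exact ((integrable_pow_mul_exp_neg_mul_sq hc _).const_mul _).add
    ((integrable_pow_mul_exp_neg_mul_sq hc _).const_mul _)

lemma integral_exp_mul_sigma2Lead {ν ℓ : ℝ} (hν : 4 < ν) (hℓ : 0 < ℓ) :
    ∫ s, exp (-((ν - 4) * ℓ) * s ^ 2) * sigma2Lead ν ℓ s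
      = -((ν - 1) * √π / (2 * (ν - 4) ^ (3 / 2 : ℝ)) * ℓ ^ (3 / 2 : ℝ)) := by
  have ha : 0 < ν - 4 := by linarith
  have hc : 0 < (ν - 4) * ℓ := by positivity
  have hΓ1 : Gamma ((1 : ℕ) + 1 / 2) = √π / 2 := by rw [Gamma_nat_add_half]; norm_num
  have hΓ2 : Gamma ((2 : ℕ) + 1 / 2) = 3 * √π / 4 := by
    rw [Gamma_nat_add_half]; norm_num [Nat.doubleFactorial]
  have h52 : ((ν - 4) * ℓ) ^ (-((2 : ℕ) + 1 / 2 : ℝ))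
      = ((ν - 4) * ℓ) ^ (-((1 : ℕ) + 1 / 2 : ℝ)) * ((ν - 4) * ℓ)⁻¹ := by
    rw [← rpow_neg_one, ← rpow_add hc]; norm_num
  have h32 : ((ν - 4) * ℓ) ^ (-((1 : ℕ) + 1 / 2 : ℝ))
      = ((ν - 4) ^ (3 / 2 : ℝ))⁻¹ * (ℓ ^ (3 / 2 : ℝ))⁻¹ := by
    rw [mul_rpow ha.le hℓ.le, rpow_neg ha.le, rpow_neg hℓ.le]; norm_num
  have hℓ3 : ℓ ^ 3 = ℓ ^ (3 / 2 : ℝ) * ℓ ^ (3 / 2 : ℝ) := by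
    rw [← rpow_add hℓ, ← rpow_natCast]; norm_num
  have : 0 < ℓ ^ (3 / 2 : ℝ) := by positivity
  have : 0 < (ν - 4) ^ (3 / 2 : ℝ) := by positivity
  rw [exp_mul_sigma2Lead_eq, integral_add ((integrable_pow_mul_exp_neg_mul_sq hc _).const_mul _)
    ((integrable_pow_mul_exp_neg_mul_sq hc _).const_mul _), integral_const_mul, integral_const_mul,
    integral_pow_two_mul_mul_exp_neg_mul_sq hc, integral_pow_two_mul_mul_exp_neg_mul_sq hc,
    hΓ1, hΓ2, h52, h32]
  field_simp
  rw [hℓ3]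
  ring

lemma I2_eq_integral_indicator (n : ℕ) (ℓ : ℝ) :
    I2 n ℓ = ∫ s, (Ioc (-1) 1).indicator (sigma2Integrand n ℓ) s := by
  rw [I2, intervalIntegral.integral_of_le (by norm_num), integral_indicator measurableSet_Ioc]
  rfl

lemma continuous_sigma2Integrand {ν : ℝ} (hν : 2 ≤ ν) (ℓ : ℝ) :
    Continuous (sigma2Integrand ν ℓ) := by
  have hrpow : Continuous fun s : ℝ => (1 - s ^ 2) ^ ((ν - 2) / 2) :=
    (by fun_prop : Continuous fun s : ℝ => 1 - s ^ 2).rpow_const fun _ => Or.inr (by linarith)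
  unfold sigma2Integrand sigma2 lam1 lam2
  fun_prop

lemma abs_indicator_sigma2Integrand_sub_le {ν ℓ : ℝ} (hν : 5 ≤ ν) (hℓ : 1 ≤ ℓ) (s : ℝ) :
    |(Ioc (-1) 1).indicator (sigma2Integrand ν ℓ) s
        - exp (-((ν - 4) * ℓ) * s ^ 2) * sigma2Lead ν ℓ s|
      ≤ 6 * ν ^ 3 * (ℓ * exp (-((ν - 4) * ℓ) * s ^ 2)
        + ℓ ^ 5 * (s ^ 8 * exp (-((ν - 4) * ℓ) * s ^ 2))) := by
  have hexp : 0 < exp (-((ν - 4) * ℓ) * s ^ 2) := exp_pos _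
  have hrhs : 6 * ν ^ 3 * (ℓ * exp (-((ν - 4) * ℓ) * s ^ 2)
        + ℓ ^ 5 * (s ^ 8 * exp (-((ν - 4) * ℓ) * s ^ 2)))
      = exp (-((ν - 4) * ℓ) * s ^ 2) * (6 * ν ^ 3 * ℓ * (1 + (ℓ * s ^ 2) ^ 4)) := by ring
  rw [hrhs]
  by_cases hs : s ∈ Ioc (-1) 1
  · have hs2 : s ^ 2 ≤ 1 := by rw [sq_le_one_iff_abs_le_one, abs_le]; exact ⟨hs.1.le, hs.2⟩
    rw [indicator_of_mem hs, sigma2Integrand, neg_mul (ν - 4), mul_assoc, ← mul_sub,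
      abs_mul, abs_of_pos hexp]
    exact mul_le_mul_of_nonneg_left (abs_rpow_mul_sigma2_sub_sigma2Lead_le hν hℓ hs2) hexp.le
  · have hs2 : 1 ≤ s ^ 2 := by
      rw [one_le_sq_iff_one_le_abs, le_abs]
      simp only [mem_Ioc, not_and_or, not_lt, not_le] at hs
      rcases hs with h | h
      · right; linarith
      · left; linarith
    rw [indicator_of_notMem hs, zero_sub, abs_neg, abs_mul, abs_of_pos hexp]
    exact mul_le_mul_of_nonneg_left (abs_sigma2Lead_le_of_one_le_sq hν hℓ hs2) hexp.le

lemma abs_I2_add_le {n : ℕ} (hn : 5 ≤ n) {ℓ : ℝ} (hℓ : 1 ≤ ℓ) :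
    |I2 n ℓ + ((n : ℝ) - 1) * √π / (2 * ((n : ℝ) - 4) ^ (3 / 2 : ℝ)) * ℓ ^ (3 / 2 : ℝ)|
      ≤ 6 * (n : ℝ) ^ 3 * (√π + Gamma (9 / 2)) * ℓ ^ (1 / 2 : ℝ) := by
  have hν : (5 : ℝ) ≤ n := by exact_mod_cast hn
  have hℓ0 : 0 < ℓ := by linarith
  have hcℓ : ℓ ≤ (n - 4) * ℓ := by nlinarith
  have hc : 0 < (n - 4) * ℓ := hℓ0.trans_le hcℓ
  have hF : Integrable ((Ioc (-1) 1).indicator (sigma2Integrand n ℓ)) :=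
    ((continuous_sigma2Integrand (by linarith) ℓ).integrableOn_Ioc).integrable_indicator
      measurableSet_Ioc
  have hg : Integrable fun s : ℝ => 6 * (n : ℝ) ^ 3 * (ℓ * exp (-((n - 4) * ℓ) * s ^ 2)
      + ℓ ^ 5 * (s ^ 8 * exp (-((n - 4) * ℓ) * s ^ 2))) :=
    (((integrable_exp_neg_mul_sq hc).const_mul _).add
      ((integrable_pow_mul_exp_neg_mul_sq hc 8).const_mul _)).const_mul _
  have h0 : ℓ * ∫ s, exp (-((n - 4) * ℓ) * s ^ 2) ≤ √π * √ℓ := by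
    simpa [-one_div, Gamma_one_half_eq] using
      pow_succ_mul_integral_pow_mul_exp_neg_mul_sq_le hℓ0 hcℓ 0
  have h4 : ℓ ^ 5 * ∫ s, s ^ 8 * exp (-((n - 4) * ℓ) * s ^ 2) ≤ Gamma (9 / 2) * √ℓ := by
    convert pow_succ_mul_integral_pow_mul_exp_neg_mul_sq_le hℓ0 hcℓ 4 using 3; norm_num
  rw [I2_eq_integral_indicator, ← neg_neg (_ * ℓ ^ (3 / 2 : ℝ)),
    ← integral_exp_mul_sigma2Lead (by linarith) hℓ0, ← sub_eq_add_neg,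
    ← integral_sub hF (integrable_exp_mul_sigma2Lead hc), ← sqrt_eq_rpow, ← norm_eq_abs]
  calc _ ≤ ∫ s, 6 * (n : ℝ) ^ 3 * (ℓ * exp (-((n - 4) * ℓ) * s ^ 2)
        + ℓ ^ 5 * (s ^ 8 * exp (-((n - 4) * ℓ) * s ^ 2))) :=
        norm_integral_le_of_norm_le hg (ae_of_all _ (abs_indicator_sigma2Integrand_sub_le hν hℓ))
    _ = 6 * (n : ℝ) ^ 3 * (ℓ * (∫ s, exp (-((n - 4) * ℓ) * s ^ 2))
        + ℓ ^ 5 * ∫ s, s ^ 8 * exp (-((n - 4) * ℓ) * s ^ 2)) := by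
      rw [integral_const_mul, integral_add ((integrable_exp_neg_mul_sq hc).const_mul _)
        ((integrable_pow_mul_exp_neg_mul_sq hc 8).const_mul _), integral_const_mul,
        integral_const_mul]
    _ ≤ 6 * (n : ℝ) ^ 3 * (√π * √ℓ + Gamma (9 / 2) * √ℓ) := by gcongr
    _ = 6 * (n : ℝ) ^ 3 * (√π + Gamma (9 / 2)) * √ℓ := by ring

/-- For `n ≥ 5`, there are `C > 0` and `ℓ₀ ≥ 1` such that for all `ℓ ≥ ℓ₀`,
`|I₂(ℓ) + ((n−1)√π / (2(n−4)^{3/2})) ℓ^{3/2}| ≤ C ℓ^{1/2}`; in particular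
`ℓ^{−3/2} I₂(ℓ) → −(n−1)√π / (2(n−4)^{3/2})` and `I₂(ℓ) → −∞` as `ℓ → ∞`. -/
theorem stmt10 (n : ℕ) (hn : 5 ≤ n) :
    (∃ C > (0 : ℝ), ∃ ℓ₀ ≥ (1 : ℝ), ∀ ℓ ≥ ℓ₀,
        |I2 n ℓ + ((n : ℝ) - 1) * Real.sqrt π / (2 * ((n : ℝ) - 4) ^ ((3 : ℝ) / 2))
            * ℓ ^ ((3 : ℝ) / 2)|
          ≤ C * ℓ ^ ((1 : ℝ) / 2)) ∧
      Tendsto (fun ℓ : ℝ => ℓ ^ (-(3 : ℝ) / 2) * I2 n ℓ) atTop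
        (nhds (-(((n : ℝ) - 1) * Real.sqrt π / (2 * ((n : ℝ) - 4) ^ ((3 : ℝ) / 2))))) ∧
      Tendsto (fun ℓ : ℝ => I2 n ℓ) atTop atBot := by
  have hν : (5 : ℝ) ≤ n := by exact_mod_cast hn
  have hA : 0 < ((n : ℝ) - 1) * √π / (2 * ((n : ℝ) - 4) ^ ((3 : ℝ) / 2)) :=
    div_pos (mul_pos (by linarith) (sqrt_pos.2 pi_pos))
      (mul_pos two_pos (rpow_pos_of_pos (by linarith) _))
  have hC : 0 < 6 * (n : ℝ) ^ 3 * (√π + Gamma (9 / 2)) := by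
    have := Gamma_pos_of_pos (by norm_num : (0 : ℝ) < 9 / 2)
    positivity
  have hbound := fun ℓ (hℓ : ℓ ≥ 1) => abs_I2_add_le hn hℓ
  have hev := eventually_atTop.2 ⟨1, hbound⟩
  refine ⟨⟨_, hC, 1, le_rfl, hbound⟩, ?_,
    tendsto_atBot_of_abs_add_le hA (by norm_num) (by norm_num) hev⟩
  rw [neg_div]
  exact tendsto_rpow_neg_mul_of_abs_add_le (by norm_num) hev
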